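/- For every τ ∈ ℂ, det(w I_n − (J_n + τ E)) = Q_n(w) − τ P_n(w), where E = e_0 e_0^* is the n×n matrix whose only nonzero entry is a 1 in position (0,0); that is, the characteristic polynomial of the rank-one update J_n + τ e_0 e_0^* equals Q_n − τ P_n. -/

import Mathlib

open Polynomial

/-- The `n × n` tridiagonal matrix `J_n` with diagonal entries `c_0, …, c_{n−1}`,
subdiagonal entries `d_1, …, d_{n−1}` (the entry in row `i`, column `i−1` is `d_i`),
and all superdiagonal entries equal to `1`. -/
noncomputable def Jmat (n : ℕ) (c d : ℕ → ℂ) : Matrix (Fin n) (Fin n) ℂ :=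
  Matrix.of fun i j =>
    if (i : ℕ) = (j : ℕ) then c i
    else if (i : ℕ) + 1 = (j : ℕ) then 1
    else if (i : ℕ) = (j : ℕ) + 1 then d i
    else 0

/-- `Q_0 = 1`, `Q_1 = w − c_0`, `Q_{l+1} = (w − c_l) Q_l − d_l Q_{l−1}`. -/
noncomputable def Qpoly (c d : ℕ → ℂ) : ℕ → Polynomial ℂ
  | 0 => 1
  | 1 => X - C (c 0)
  | l + 2 => (X - C (c (l + 1))) * Qpoly c d (l + 1) - C (d (l + 1)) * Qpoly c d l

/-- `P_0 = 0`, `P_1 = 1`, `P_{l+1} = (w − c_l) P_l − d_l P_{l−1}`. -/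
noncomputable def Ppoly (c d : ℕ → ℂ) : ℕ → Polynomial ℂ
  | 0 => 0
  | 1 => 1
  | l + 2 => (X - C (c (l + 1))) * Ppoly c d (l + 1) - C (d (l + 1)) * Ppoly c d l

/-! Adding `τ e₀ e₀*` to `J_n` just replaces `c₀` by `c₀ + τ`. Expanding `det (w I − J_n)` along
the last row, and the resulting minor along its last column, gives the three-term recurrence of
`Q_n`, so `J_n` has characteristic polynomial `Q_n`. Finally `Q_n` is affine in `c₀`: `Q_n` and
`P_n` obey the same recurrence from `l = 1` on, and the initial values of `Q` computed with
`c₀ + τ` are those of `Q − τ P`. -/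

namespace Matrix

variable {R : Type*} [CommRing R]

theorem charmatrix_submatrix {m n : Type*} [Fintype m] [Fintype n] [DecidableEq m]
    [DecidableEq n] (M : Matrix n n R) {f : m → n} (hf : Function.Injective f) :
    (M.submatrix f f).charmatrix = M.charmatrix.submatrix f f := by
  ext i j
  by_cases h : i = j
  · subst h; simp
  · simp [h, hf.ne h]

theorem det_succ_succ_of_last_row_col_eq_zero {m : ℕ}
    (M : Matrix (Fin (m + 2)) (Fin (m + 2)) R)
    (hrow : ∀ j : Fin m, M (Fin.last _) j.castSucc.castSucc = 0)
    (hcol : ∀ i : Fin m, M i.castSucc.castSucc (Fin.last _) = 0) :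
    M.det = M (Fin.last _) (Fin.last _) * (M.submatrix Fin.castSucc Fin.castSucc).det
      - M (Fin.last _) (Fin.last m).castSucc * M (Fin.last m).castSucc (Fin.last _)
        * ((M.submatrix Fin.castSucc Fin.castSucc).submatrix Fin.castSucc Fin.castSucc).det := by
  have hminor : (M.submatrix Fin.castSucc (Fin.last m).castSucc.succAbove).det
      = M (Fin.last m).castSucc (Fin.last _)
        * ((M.submatrix Fin.castSucc Fin.castSucc).submatrix Fin.castSucc Fin.castSucc).det := by
    rw [det_succ_column _ (Fin.last m), Fin.sum_univ_castSucc]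
    have hcols : (Fin.last m).castSucc.succAbove ∘ Fin.castSucc = Fin.castSucc ∘ Fin.castSucc :=
      funext fun j => Fin.succAbove_castSucc_of_lt _ _ (Fin.castSucc_lt_last j)
    simp [hcol, hcols]
  rw [det_succ_row _ (Fin.last _), Fin.sum_univ_castSucc, Fin.sum_univ_castSucc]
  simp [hrow, hminor]
  ring

end Matrix

theorem Jmat_submatrix_castSucc (n : ℕ) (c d : ℕ → ℂ) :
    (Jmat (n + 1) c d).submatrix Fin.castSucc Fin.castSucc = Jmat n c d := rfl

theorem charmatrix_Jmat_apply_eq_zero {n : ℕ} (c d : ℕ → ℂ) {i j : Fin n}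
    (h : (i : ℕ) + 1 < j ∨ (j : ℕ) + 1 < i) : (Jmat n c d).charmatrix i j = 0 := by
  rw [Matrix.charmatrix_apply_ne _ _ _ (by rw [Ne, Fin.ext_iff]; omega)]
  simp only [Jmat, Matrix.of_apply]
  rw [if_neg (by omega), if_neg (by omega), if_neg (by omega), map_zero, neg_zero]

theorem charpoly_Jmat (c d : ℕ → ℂ) (n : ℕ) : (Jmat n c d).charpoly = Qpoly c d n := by
  induction n using Nat.twoStepInduction with
  | zero => simp [Qpoly]
  | one => simp [Matrix.charpoly, Jmat, Qpoly]
  | more m ih₀ ih₁ =>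
    have hsub : (Jmat (m + 2) c d).charmatrix (Fin.last _) (Fin.last m).castSucc
        = -C (d (m + 1)) := by
      rw [Matrix.charmatrix_apply_ne _ _ _ (by simp [Fin.ext_iff])]
      simp only [Jmat, Matrix.of_apply, Fin.val_last, Fin.val_castSucc]
      rw [if_neg (by omega), if_neg (by omega), if_pos trivial]
    rw [Matrix.charpoly, Matrix.det_succ_succ_of_last_row_col_eq_zero,
      ← Matrix.charmatrix_submatrix _ (Fin.castSucc_injective _), Jmat_submatrix_castSucc,
      ← Matrix.charmatrix_submatrix _ (Fin.castSucc_injective _), Jmat_submatrix_castSucc,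
      ← Matrix.charpoly, ← Matrix.charpoly, ih₀, ih₁, hsub]
    · simp [Jmat, Qpoly]
    · exact fun j => charmatrix_Jmat_apply_eq_zero c d (by simp)
    · exact fun i => charmatrix_Jmat_apply_eq_zero c d (by simp)

theorem Qpoly_update_zero (c d : ℕ → ℂ) (τ : ℂ) (n : ℕ) :
    Qpoly (Function.update c 0 (c 0 + τ)) d n = Qpoly c d n - C τ * Ppoly c d n := by
  induction n using Nat.twoStepInduction with
  | zero => simp [Qpoly, Ppoly]
  | one => simp [Qpoly, Ppoly]; ring
  | more m ih₀ ih₁ =>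
    simp only [Qpoly, Ppoly, ih₀, ih₁, Function.update_of_ne (Nat.succ_ne_zero m)]
    ring

theorem Jmat_add_smul_single_zero (n : ℕ) (hn : 1 ≤ n) (c d : ℕ → ℂ) (τ : ℂ) :
    Jmat n c d + τ • Matrix.single (⟨0, hn⟩ : Fin n) (⟨0, hn⟩ : Fin n) (1 : ℂ)
      = Jmat n (Function.update c 0 (c 0 + τ)) d := by
  ext i j
  simp only [Jmat, Matrix.add_apply, Matrix.smul_apply, Matrix.of_apply, Matrix.single_apply,
    Function.update_apply, Fin.ext_iff, smul_eq_mul]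
  by_cases hij : (i : ℕ) = j
  · rcases eq_or_ne (j : ℕ) 0 with hj | hj
    · simp [hij, hj]
    · simp [hij, hj, hj.symm]
  · simp [hij]
    omega

/-- For every `τ ∈ ℂ`, the characteristic polynomial of the rank-one update
`J_n + τ e_0 e_0^*` equals `Q_n − τ P_n`; here `e_0 e_0^*` is the matrix whose only nonzero
entry is a `1` in position `(0,0)`. -/
theorem charpoly_rank_one_update (n : ℕ) (hn : 1 ≤ n) (c d : ℕ → ℂ) (τ : ℂ) :
    (Jmat n c d + τ • Matrix.single (⟨0, hn⟩ : Fin n) (⟨0, hn⟩ : Fin n) (1 : ℂ)).charpoly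
      = Qpoly c d n - C τ * Ppoly c d n := by
  rw [Jmat_add_smul_single_zero n hn c d τ, charpoly_Jmat, Qpoly_update_zero]
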